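/- The natural homomorphism from the free product of three copies of ℤ/2, presented as ⟨a,b,c | a² = b² = c² = 1⟩, to the group P, sending the generators a, b, c to the generators a, b, c of P, is injective; in other words, the subgroup H_3 of H_4 generated by a, b, c is isomorphic to ⟨a⟩_2 * ⟨b⟩_2 * ⟨c⟩_2. -/

import Mathlib

/-- The commutator `[x, y] = x⁻¹y⁻¹xy`. -/
def gcomm {G : Type*} [Group G] (x y : G) : G := x⁻¹ * y⁻¹ * x * y

/-- The generators of the free group on four letters `a, b, c, d`. -/
def y : Fin 4 → FreeGroup (Fin 4) := FreeGroup.of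

/-- The relators of the group `P`:
`a², b², c², d², [(ab)², (cd)²], [(ac)², (bd)²], [(ad)², (bc)²]`. -/
def relsP : Set (FreeGroup (Fin 4)) :=
  {y 0 ^ 2, y 1 ^ 2, y 2 ^ 2, y 3 ^ 2,
    gcomm ((y 0 * y 1) ^ 2) ((y 2 * y 3) ^ 2),
    gcomm ((y 0 * y 2) ^ 2) ((y 1 * y 3) ^ 2),
    gcomm ((y 0 * y 3) ^ 2) ((y 1 * y 2) ^ 2)}

/-- The group `P = ⟨a,b,c,d | a² = b² = c² = d² = 1, [(ab)²,(cd)²] = [(ac)²,(bd)²] = [(ad)²,(bc)²] = 1⟩`. -/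
abbrev P : Type := PresentedGroup relsP

/-- The relators `a², b², c²` of the free product `ℤ/2 * ℤ/2 * ℤ/2`. -/
def relsA3 : Set (FreeGroup (Fin 3)) :=
  {FreeGroup.of 0 ^ 2, FreeGroup.of 1 ^ 2, FreeGroup.of 2 ^ 2}

/-- The free product `⟨a,b,c | a² = b² = c² = 1⟩ = ℤ/2 * ℤ/2 * ℤ/2`. -/
abbrev A3 : Type := PresentedGroup relsA3

/-!
Sending `d ↦ 1` kills every relator of `P`: each commutator relator has an entry `(xd)²`, which
becomes `x² = 1`. This gives a retraction `P → ⟨a,b,c | a² = b² = c² = 1⟩` that is a left inverse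
of the natural map, which is therefore injective.
-/

lemma gcomm_one_left {G : Type*} [Group G] (x : G) : gcomm 1 x = 1 := by
  simp [gcomm]

lemma gcomm_one_right {G : Type*} [Group G] (x : G) : gcomm x 1 = 1 := by
  simp [gcomm]

lemma map_gcomm {G H : Type*} [Group G] [Group H] (f : G →* H) (x y : G) :
    f (gcomm x y) = gcomm (f x) (f y) := by
  simp [gcomm]

lemma PresentedGroup.of_pow_eq_one_of_mem {α : Type*} {rels : Set (FreeGroup α)} {x : α} {n : ℕ}
    (h : FreeGroup.of x ^ n ∈ rels) : (PresentedGroup.of x : PresentedGroup rels) ^ n = 1 := by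
  rw [PresentedGroup.of, ← map_pow]
  exact PresentedGroup.one_of_mem h

lemma relsA3_mapsTo_relsP : relsA3.MapsTo (FreeGroup.map Fin.castSucc) relsP := by
  simp [Set.MapsTo, relsA3, relsP, y]

def A3.toP : A3 →* P :=
  PresentedGroup.map (FreeGroup.map Fin.castSucc) relsA3_mapsTo_relsP

lemma A3.toP_of (i : Fin 3) :
    A3.toP (PresentedGroup.of i) = PresentedGroup.of (Fin.castSucc i) :=
  rfl

def P.killD : Fin 4 → A3 :=
  ![PresentedGroup.of 0, PresentedGroup.of 1, PresentedGroup.of 2, 1]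

lemma P.killD_sq (i : Fin 4) : P.killD i ^ 2 = 1 := by
  have hsq (j : Fin 3) : (PresentedGroup.of j : A3) ^ 2 = 1 :=
    PresentedGroup.of_pow_eq_one_of_mem (by fin_cases j <;> simp [relsA3])
  fin_cases i <;> simp [P.killD, hsq]

lemma P.killD_rels : ∀ r ∈ relsP, FreeGroup.lift P.killD r = 1 := by
  have h0 := P.killD_sq 0
  have h1 := P.killD_sq 1
  have h2 := P.killD_sq 2
  have hd : P.killD 3 = 1 := rfl
  simp only [relsP, Set.mem_insert_iff, Set.mem_singleton_iff]
  rintro r (rfl | rfl | rfl | rfl | rfl | rfl | rfl) <;>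
    simp [y, map_gcomm, hd, h0, h1, h2, gcomm_one_left, gcomm_one_right]

def P.toA3 : P →* A3 :=
  PresentedGroup.toGroup P.killD_rels

lemma P.toA3_comp_toP : P.toA3.comp A3.toP = MonoidHom.id A3 := by
  refine PresentedGroup.ext fun i => ?_
  simp only [MonoidHom.comp_apply, A3.toP_of, P.toA3, PresentedGroup.toGroup.of]
  fin_cases i <;> rfl

/-- The natural homomorphism from the free product of three copies of `ℤ/2`,
presented as `⟨a,b,c | a² = b² = c² = 1⟩`, to the group `P`, sending the generators `a, b, c`
to the generators `a, b, c` of `P`, is injective; in other words, the subgroup `H_3` of `H_4`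
generated by `a, b, c` is isomorphic to `⟨a⟩₂ * ⟨b⟩₂ * ⟨c⟩₂`. -/
theorem stmt_17 : ∃ ψ : A3 →* P,
    (∀ i : Fin 3, ψ (PresentedGroup.of (rels := relsA3) i) =
      PresentedGroup.of (rels := relsP) (Fin.castSucc i)) ∧
    Function.Injective ψ :=
  ⟨A3.toP, A3.toP_of, Function.LeftInverse.injective (DFunLike.congr_fun P.toA3_comp_toP)⟩
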